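/- Poisson integrals are Möbius harmonic: let M be an irreducible trace monoid with Bernoulli measure P on its boundary BM, f(u) = P(↑u), and φ ∈ L^∞(BM). Then λ(u) = (1/f(u)) ∫_{↑u} φ dP satisfies Σ_{c clique} (-1)^{|c|} f(c) λ(u·c) = 0 for all u ∈ M, and |λ(u)| ≤ ‖φ‖_∞ for all u. -/

import Mathlib

open scoped Classical

variable {α : Type*}

/-- A clique of the independence graph. -/
def IsCliq (I : α → α → Prop) (c : Finset α) : Prop :=
  ∀ a ∈ c, ∀ b ∈ c, a ≠ b → I a b

/-- Cartier–Foata admissibility `c → c'`. -/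
def CFadm (I : α → α → Prop) (c c' : Finset α) : Prop :=
  ∀ b ∈ c', ∃ a ∈ c, ¬ I a b

/-- Parallelism of cliques: `c ∥ c'`. -/
def Par (I : α → α → Prop) (c c' : Finset α) : Prop :=
  ∀ a ∈ c, ∀ b ∈ c', I a b

/-- The commutation relation generating the trace monoid congruence. -/
def traceRel (I : α → α → Prop) : FreeMonoid α → FreeMonoid α → Prop :=
  fun x y => ∃ a b, I a b ∧ x = FreeMonoid.of a * FreeMonoid.of b ∧
    y = FreeMonoid.of b * FreeMonoid.of a

/-- The trace monoid `M(Σ, I)`. -/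
abbrev TM (I : α → α → Prop) := Con.Quotient (conGen (traceRel I))

/-- Canonical projection from the free monoid. -/
def mkTM (I : α → α → Prop) : FreeMonoid α →* TM I := Con.mk' _

/-- The image of a letter in the trace monoid. -/
def emb (I : α → α → Prop) (a : α) : TM I := mkTM I (FreeMonoid.of a)

/-- The trace associated to a clique. -/
noncomputable def ctr (I : α → α → Prop) (c : Finset α) : TM I :=
  mkTM I ((c.toList.map FreeMonoid.of).prod)

/-- The prefix (left divisibility) order on traces. -/
def pref (I : α → α → Prop) (u v : TM I) : Prop := ∃ w, v = u * w

theorem pref_trans (I : α → α → Prop) {u v w : TM I} (h1 : pref I u v)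
    (h2 : pref I v w) : pref I u w := by
  obtain ⟨a, rfl⟩ := h1; obtain ⟨b, rfl⟩ := h2; exact ⟨a * b, mul_assoc _ _ _⟩

/-- Nondecreasing sequences of traces. -/
def HSeq (I : α → α → Prop) := {x : ℕ → TM I // ∀ n, pref I (x n) (x (n + 1))}

/-- The domination preorder on nondecreasing sequences. -/
def preceq (I : α → α → Prop) (x y : HSeq I) : Prop := ∀ n, ∃ m, pref I (x.1 n) (y.1 m)

instance hseqSetoid (I : α → α → Prop) : Setoid (HSeq I) where
  r x y := preceq I x y ∧ preceq I y x
  iseqv := by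
    constructor
    · intro x; constructor <;> exact fun n => ⟨n, 1, (mul_one _).symm⟩
    · rintro x y ⟨h1, h2⟩; exact ⟨h2, h1⟩
    · rintro x y z ⟨h1, h2⟩ ⟨h3, h4⟩
      constructor
      · intro n; obtain ⟨m, hm⟩ := h1 n; obtain ⟨k, hk⟩ := h3 m
        exact ⟨k, pref_trans I hm hk⟩
      · intro n; obtain ⟨m, hm⟩ := h4 n; obtain ⟨k, hk⟩ := h2 m
        exact ⟨k, pref_trans I hm hk⟩

/-- Generalized traces: the collapse of the preordered set of nondecreasing sequences. -/
def GT (I : α → α → Prop) := Quotient (hseqSetoid I)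

/-- A finite trace, seen as a generalized trace. -/
def toGT (I : α → α → Prop) (u : TM I) : GT I :=
  Quotient.mk (hseqSetoid I) ⟨fun _ => u, fun _ => ⟨1, (mul_one u).symm⟩⟩

/-- `u` is a prefix of the generalized trace `ξ`. -/
def leT (I : α → α → Prop) (u : TM I) (ξ : GT I) : Prop :=
  Quotient.liftOn ξ (fun x => ∃ m, pref I u (x.1 m)) (by
    rintro x y ⟨hxy, hyx⟩
    apply propext
    constructor
    · rintro ⟨m, hm⟩; obtain ⟨k, hk⟩ := hxy m; exact ⟨k, pref_trans I hm hk⟩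
    · rintro ⟨m, hm⟩; obtain ⟨k, hk⟩ := hyx m; exact ⟨k, pref_trans I hm hk⟩)

/-- The boundary at infinity: generalized traces that are not finite traces. -/
def Bdry (I : α → α → Prop) := {ξ : GT I // ∀ u : TM I, ξ ≠ toGT I u}

/-- The elementary cylinder of base `u`. -/
def cylSet (I : α → α → Prop) (u : TM I) : Set (Bdry I) := {ξ | leT I u ξ.1}

/-- The σ-algebra generated by elementary cylinders. -/
instance bdryMeasurableSpace (I : α → α → Prop) : MeasurableSpace (Bdry I) :=
  MeasurableSpace.generateFrom {s | ∃ u : TM I, s = cylSet I u}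

/-!
Fix `u` and a boundary point `ξ ∈ ↑u`. Since `ξ` is infinite, the set `S` of letters `a` with
`u·a ≤ ξ` is nonempty, and a clique `c` satisfies `u·c ≤ ξ` exactly when `c ⊆ S`. Hence
`∑_c (-1)^|c| 1_{↑(u·c)}(ξ) = ∑_{c ⊆ S} (-1)^|c| = 0`, and this also holds trivially off `↑u`.
Integrating `φ` against this identity and using `f(u·c) = f(u) f(c)` gives harmonicity; the bound
is that of an average of `φ`.

The combinatorial input is that two distinct letters `a`, `b` with `u·a ≤ w` and `u·b ≤ w`
commute and satisfy `u·a·b ≤ w`. It is proved by projecting traces onto pairs of dependent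
letters, on which they become ordinary words.
-/

open MeasureTheory Filter
open scoped ENNReal

section

variable {I : α → α → Prop}

theorem FreeMonoid.eq_of_of_mul_eq_of_mul {a b : α} {x y : FreeMonoid α}
    (h : FreeMonoid.of a * x = FreeMonoid.of b * y) : a = b :=
  (List.cons.inj h).1

theorem mkTM_surjective : Function.Surjective (mkTM I) := Con.mk'_surjective

theorem commute_emb {a b : α} (h : I a b) : Commute (emb I a) (emb I b) := by
  show mkTM I _ * mkTM I _ = mkTM I _ * mkTM I _
  rw [← map_mul, ← map_mul]
  exact (Con.eq _).mpr (ConGen.Rel.of _ _ ⟨a, b, h, rfl, rfl⟩)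

noncomputable def pairProj (a b : α) : FreeMonoid α →* FreeMonoid α :=
  FreeMonoid.lift fun x => if x = a ∨ x = b then FreeMonoid.of x else 1

theorem pairProj_of_left (a b : α) : pairProj a b (.of a) = .of a := by
  simp [pairProj]

theorem pairProj_of_right (a b : α) : pairProj a b (.of b) = .of b := by
  simp [pairProj]

theorem pairProj_of_of_ne {a b c : α} (ha : c ≠ a) (hb : c ≠ b) :
    pairProj a b (.of c) = 1 := by
  simp [pairProj, ha, hb]

section Projection

variable [Std.Symm I] [Std.Irrefl I]

/-- At most one letter of a commuting pair survives the projection onto a dependent pair. -/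
theorem pairProj_eq_of_traceRel {a b : α} (hD : ¬ I a b) {x y : FreeMonoid α}
    (h : traceRel I x y) : pairProj a b x = pairProj a b y := by
  obtain ⟨c, d, hcd, rfl, rfl⟩ := h
  have hne : c ≠ d := by rintro rfl; exact irrefl c hcd
  simp only [map_mul]
  by_cases hc : c = a ∨ c = b
  · by_cases hd : d = a ∨ d = b
    · exfalso
      obtain rfl | rfl := hc <;> obtain rfl | rfl := hd
      exacts [hne rfl, hD hcd, hD (symm hcd), hne rfl]
    · rw [not_or] at hd
      rw [pairProj_of_of_ne hd.1 hd.2, one_mul, mul_one]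
  · rw [not_or] at hc
    rw [pairProj_of_of_ne hc.1 hc.2, one_mul, mul_one]

noncomputable def pairProjTM {a b : α} (hD : ¬ I a b) : TM I →* FreeMonoid α :=
  Con.lift _ (pairProj a b) <| Con.conGen_le.mpr fun _ _ h =>
    (Con.ker_rel _).mpr (pairProj_eq_of_traceRel hD h)

theorem pairProjTM_mk {a b : α} (hD : ¬ I a b) (x : FreeMonoid α) :
    pairProjTM hD (mkTM I x) = pairProj a b x :=
  Con.lift_mk' _ _

theorem exists_mkTM_eq_emb_mul {a : α} (x : FreeMonoid α)
    (h : ∀ b, ¬ I a b → ∃ s, pairProj a b x = .of a * s) :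
    ∃ w, mkTM I x = emb I a * w := by
  induction x using FreeMonoid.inductionOn' with
  | one =>
    obtain ⟨s, hs⟩ := h a (irrefl a)
    exact absurd hs.symm (List.cons_ne_nil _ _)
  | of_mul c x ih =>
    by_cases hca : c = a
    · exact ⟨mkTM I x, by rw [map_mul, hca]; rfl⟩
    by_cases hac : I a c
    · obtain ⟨w, hw⟩ := ih fun b hD => by
        obtain ⟨s, hs⟩ := h b hD
        have hcb : c ≠ b := by rintro rfl; exact hD hac
        rw [map_mul, pairProj_of_of_ne hca hcb, one_mul] at hs
        exact ⟨s, hs⟩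
      refine ⟨emb I c * w, ?_⟩
      rw [map_mul, hw, ← mul_assoc, ← mul_assoc]
      exact congrArg (· * w) (commute_emb (symm hac)).eq
    · obtain ⟨s, hs⟩ := h c hac
      rw [map_mul, pairProj_of_right] at hs
      exact absurd (FreeMonoid.eq_of_of_mul_eq_of_mul hs) hca

theorem pairProjTM_of_mul_emb_mul_eq {a b c d : α} (hD : ¬ I c d) {v s t : TM I}
    (E : v * emb I a * s = v * emb I b * t) :
    pairProj c d (.of a) * pairProjTM hD s = pairProj c d (.of b) * pairProjTM hD t := by
  have := congrArg (pairProjTM hD) E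
  simp only [map_mul, emb, pairProjTM_mk, mul_assoc] at this
  exact mul_left_cancel this

theorem indep_of_mul_emb_mul_eq {a b : α} (hab : a ≠ b) {v s t : TM I}
    (E : v * emb I a * s = v * emb I b * t) : I a b := by
  by_contra hD
  have := pairProjTM_of_mul_emb_mul_eq hD E
  rw [pairProj_of_left, pairProj_of_right] at this
  exact hab (FreeMonoid.eq_of_of_mul_eq_of_mul this)

theorem exists_eq_emb_mul_of_mul_emb_mul_eq {a b : α} (hab : a ≠ b) {v s t : TM I}
    (E : v * emb I a * s = v * emb I b * t) : ∃ r, t = emb I a * r := by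
  have hI := indep_of_mul_emb_mul_eq hab E
  obtain ⟨x, rfl⟩ := mkTM_surjective t
  refine exists_mkTM_eq_emb_mul x fun b' hD => ⟨pairProjTM hD s, ?_⟩
  have hbb' : b ≠ b' := by rintro rfl; exact hD hI
  have := pairProjTM_of_mul_emb_mul_eq hD E
  rw [pairProj_of_left, pairProj_of_of_ne (Ne.symm hab) hbb', one_mul, pairProjTM_mk] at this
  exact this.symm

theorem pref_mul_emb_mul_emb {a b : α} (hab : a ≠ b) {v w : TM I}
    (ha : pref I (v * emb I a) w) (hb : pref I (v * emb I b) w) :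
    pref I (v * emb I a * emb I b) w := by
  obtain ⟨s, rfl⟩ := ha
  obtain ⟨t, E⟩ := hb
  obtain ⟨r, rfl⟩ := exists_eq_emb_mul_of_mul_emb_mul_eq hab E
  refine ⟨r, ?_⟩
  rw [E, mul_assoc v, mul_assoc v, ← mul_assoc (emb I b),
    (commute_emb (indep_of_mul_emb_mul_eq hab E)).eq]
  simp only [mul_assoc]

end Projection

theorem ctr_eq_prod (c : Finset α) : ctr I c = (c.toList.map (emb I)).prod := by
  rw [ctr, map_list_prod, List.map_map]
  rfl

theorem ctr_empty : ctr I (∅ : Finset α) = 1 := by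
  simp [ctr_eq_prod]

theorem ctr_insert {a : α} {c : Finset α} (ha : a ∉ c) (hcl : IsCliq I (insert a c)) :
    ctr I (insert a c) = emb I a * ctr I c := by
  have hcomm : ((insert a c).toList.map (emb I)).Pairwise Commute :=
    List.Pairwise.map _ (fun _ _ => id) <|
      (insert a c).nodup_toList.imp_of_mem fun hx hy hxy =>
        commute_emb (hcl _ (Finset.mem_toList.1 hx) _ (Finset.mem_toList.1 hy) hxy)
  rw [ctr_eq_prod, ctr_eq_prod, ((Finset.toList_insert ha).map _).prod_eq' hcomm,
    List.map_cons, List.prod_cons]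

theorem ctr_eq_emb_mul_erase {a : α} {c : Finset α} (ha : a ∈ c) (hcl : IsCliq I c) :
    ctr I c = emb I a * ctr I (c.erase a) := by
  rw [← ctr_insert (Finset.notMem_erase a c) (by rwa [Finset.insert_erase ha]),
    Finset.insert_erase ha]

theorem pref_mul_ctr [Std.Symm I] [Std.Irrefl I] {c : Finset α} (hcl : IsCliq I c)
    {u w : TM I} (hu : pref I u w) (h : ∀ a ∈ c, pref I (u * emb I a) w) :
    pref I (u * ctr I c) w := by
  induction c using Finset.induction_on generalizing u with
  | empty => rwa [ctr_empty, mul_one]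
  | @insert a c ha ih =>
    have hua := h a (Finset.mem_insert_self a c)
    rw [ctr_insert ha hcl, ← mul_assoc]
    refine ih (fun x hx y hy => hcl x (Finset.mem_insert_of_mem hx) y
      (Finset.mem_insert_of_mem hy)) hua fun b hb => ?_
    have hab : a ≠ b := by rintro rfl; exact ha hb
    exact pref_mul_emb_mul_emb hab hua (h b (Finset.mem_insert_of_mem hb))

theorem HSeq.pref_of_le (x : HSeq I) {n m : ℕ} (h : n ≤ m) : pref I (x.1 n) (x.1 m) := by
  induction m, h using Nat.le_induction with
  | base => exact ⟨1, (mul_one _).symm⟩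
  | succ m _ ih => exact pref_trans I ih (x.2 m)

theorem leT_mk_iff_eventually (v : TM I) (x : HSeq I) :
    leT I v (Quotient.mk _ x) ↔ ∀ᶠ n in atTop, pref I v (x.1 n) :=
  ⟨fun ⟨m, hm⟩ => eventually_atTop.2 ⟨m, fun _ hn => pref_trans I hm (x.pref_of_le hn)⟩,
    fun h => h.exists⟩

theorem leT_of_pref {u v : TM I} (h : pref I u v) {ξ : GT I} (hv : leT I v ξ) : leT I u ξ := by
  induction ξ using Quotient.ind with
  | _ x =>
    obtain ⟨m, hm⟩ := hv
    exact ⟨m, pref_trans I h hm⟩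

theorem isCliq_and_leT_mul_ctr_iff [Std.Symm I] [Std.Irrefl I] {u : TM I} {ξ : GT I}
    (hu : leT I u ξ) (c : Finset α) :
    IsCliq I c ∧ leT I (u * ctr I c) ξ ↔ ∀ a ∈ c, leT I (u * emb I a) ξ := by
  refine ⟨fun ⟨hcl, hle⟩ a ha => leT_of_pref ⟨ctr I (c.erase a), ?_⟩ hle, fun h => ?_⟩
  · rw [ctr_eq_emb_mul_erase ha hcl, mul_assoc]
  induction ξ using Quotient.ind with
  | _ x =>
    simp only [leT_mk_iff_eventually] at hu h ⊢
    have hall := hu.and ((Finset.eventually_all c).2 h)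
    obtain ⟨N, -, hN⟩ := hall.exists
    have hcl : IsCliq I c := fun a ha b hb hab =>
      match hN a ha, hN b hb with
      | ⟨_, hs⟩, ⟨_, ht⟩ => indep_of_mul_emb_mul_eq hab (hs.symm.trans ht)
    exact ⟨hcl, hall.mono fun n ⟨hun, hn⟩ => pref_mul_ctr hcl hun hn⟩

theorem exists_leT_mul_emb {u : TM I} (ξ : Bdry I) (hu : leT I u ξ.1) :
    ∃ a, leT I (u * emb I a) ξ.1 := by
  obtain ⟨x, hx⟩ := Quotient.exists_rep ξ.1
  rw [← hx] at hu ⊢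
  by_contra! hno
  -- otherwise every term of `x` is a prefix of `u`, so `ξ` would be the finite trace `u`
  refine ξ.2 u (hx ▸ Quotient.sound ⟨fun n => ⟨0, ?_⟩, fun _ => hu⟩)
  obtain ⟨k, ⟨w, hw⟩, hnk⟩ :=
    (((leT_mk_iff_eventually u x).1 hu).and (eventually_ge_atTop n)).exists
  obtain ⟨l, rfl⟩ := mkTM_surjective w
  cases l using FreeMonoid.casesOn with
  | one => rw [map_one, mul_one] at hw; exact hw ▸ x.pref_of_le hnk
  | of_mul a l => exact absurd ⟨k, mkTM I l, by rw [hw, map_mul, mul_assoc]; rfl⟩ (hno a)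

theorem sum_neg_one_pow_card_isCliq_leT [Fintype α] [Std.Symm I] [Std.Irrefl I] (u : TM I)
    (ξ : Bdry I) :
    ∑ c : Finset α,
      (if IsCliq I c ∧ leT I (u * ctr I c) ξ.1 then (-1 : ℝ) ^ c.card else 0) = 0 := by
  by_cases hu : leT I u ξ.1
  · obtain ⟨a, ha⟩ := exists_leT_mul_emb ξ hu
    set S := Finset.univ.filter fun a => leT I (u * emb I a) ξ.1
    have hS : S.Nonempty := ⟨a, by simpa [S] using ha⟩
    calc _ = ∑ c ∈ S.powerset, (-1 : ℝ) ^ c.card := by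
          rw [← Finset.sum_filter]
          congr 1
          ext c
          simp [S, isCliq_and_leT_mul_ctr_iff hu, Finset.subset_iff]
      _ = 0 := by exact_mod_cast Finset.sum_powerset_neg_one_pow_card_of_nonempty hS
  · exact Finset.sum_eq_zero fun c _ => if_neg fun h => hu (leT_of_pref ⟨ctr I c, rfl⟩ h.2)

theorem measurableSet_cylSet (u : TM I) : MeasurableSet (cylSet I u) :=
  MeasurableSpace.measurableSet_generateFrom ⟨u, rfl⟩

section SetIntegral

variable {Ω ι : Type*} [MeasurableSpace Ω] {μ : Measure Ω} {φ : Ω → ℝ}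

theorem sum_mul_setIntegral_eq_zero (hφ : Integrable φ μ) (t : Finset ι) (w : ι → ℝ)
    {s : ι → Set Ω} (hs : ∀ i, MeasurableSet (s i))
    (h : ∀ x, ∑ i ∈ t, w i * (s i).indicator 1 x = 0) :
    ∑ i ∈ t, w i * ∫ x in s i, φ x ∂μ = 0 := by
  calc ∑ i ∈ t, w i * ∫ x in s i, φ x ∂μ
      = ∫ x, ∑ i ∈ t, w i * (s i).indicator φ x ∂μ := by
        rw [integral_finsetSum _ fun i _ => (hφ.indicator (hs i)).const_mul (w i)]
        simp only [integral_const_mul, integral_indicator (hs _)]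
    _ = ∫ x, (∑ i ∈ t, w i * (s i).indicator 1 x) * φ x ∂μ := by
        congr 1 with x
        rw [Finset.sum_mul]
        refine Finset.sum_congr rfl fun i _ => ?_
        by_cases hx : x ∈ s i <;> simp [hx]
    _ = 0 := by simp [h]

theorem abs_inv_mul_setIntegral_le {s : Set Ω} (hs : μ s ≠ 0) (hs' : μ s ≠ ∞) {C : ℝ}
    (h : ∀ᵐ x ∂μ, |φ x| ≤ C) : |(μ s).toReal⁻¹ * ∫ x in s, φ x ∂μ| ≤ C := by
  have hpos : 0 < (μ s).toReal := ENNReal.toReal_pos hs hs'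
  have hbound : ‖∫ x in s, φ x ∂μ‖ ≤ C * μ.real s :=
    norm_setIntegral_le_of_norm_le_const_ae hs'.lt_top (ae_restrict_of_ae h)
  rwa [abs_mul, abs_inv, abs_of_pos hpos, inv_mul_le_iff₀ hpos, mul_comm, ← Real.norm_eq_abs]

end SetIntegral

theorem sum_isCliq_neg_one_pow_mul_setIntegral_eq_zero [Fintype α] [Std.Symm I] [Std.Irrefl I]
    {P : Measure (Bdry I)} {φ : Bdry I → ℝ} (hφ : Integrable φ P) (u : TM I) :
    ∑ c : Finset α, (if IsCliq I c then (-1 : ℝ) ^ c.card else 0) *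
      ∫ ξ in cylSet I (u * ctr I c), φ ξ ∂P = 0 :=
  sum_mul_setIntegral_eq_zero hφ _ _ (fun _ => measurableSet_cylSet _) fun ξ => by
    refine (Finset.sum_congr rfl fun c _ => ?_).trans (sum_neg_one_pow_card_isCliq_leT u ξ)
    by_cases hc : IsCliq I c <;> by_cases hξ : leT I (u * ctr I c) ξ.1 <;>
      simp [hc, hξ, cylSet, Set.indicator]

end

theorem poisson_integral_harmonic_general {α : Type*} [Fintype α] (I : α → α → Prop)
    (hsymm : ∀ a b, I a b → I b a) (hirr : ∀ a, ¬ I a a)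
    (P : Measure (Bdry I)) [IsProbabilityMeasure P]
    (hpos : ∀ u : TM I, 0 < P (cylSet I u))
    (hmult : ∀ u v : TM I, P (cylSet I (u * v)) = P (cylSet I u) * P (cylSet I v))
    (φ : Bdry I → ℝ) (hmeas : Measurable φ) (C : ℝ)
    (hbd : ∀ᵐ ξ ∂P, |φ ξ| ≤ C)
    (lam : TM I → ℝ)
    (hlam : ∀ u : TM I,
      lam u = (1 / (P (cylSet I u)).toReal) * ∫ ξ in cylSet I u, φ ξ ∂P) :
    (∀ u : TM I,
      (∑ c : Finset α,
        if IsCliq I c then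
          (-1 : ℝ) ^ c.card * (P (cylSet I (ctr I c))).toReal * lam (u * ctr I c)
        else 0) = 0) ∧
    (∀ u : TM I, |lam u| ≤ C) := by
  have : Std.Symm I := ⟨hsymm⟩
  have : Std.Irrefl I := ⟨hirr⟩
  refine ⟨fun u => ?_, fun u => ?_⟩
  · have hint : Integrable φ P :=
      (integrable_const C).mono' hmeas.aestronglyMeasurable (by simpa using hbd)
    have hF (v : TM I) : (P (cylSet I v)).toReal ≠ 0 :=
      ENNReal.toReal_ne_zero.2 ⟨(hpos v).ne', measure_ne_top P _⟩
    have hterm (c : Finset α) :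
        (if IsCliq I c then
          (-1 : ℝ) ^ c.card * (P (cylSet I (ctr I c))).toReal * lam (u * ctr I c) else 0) =
        (P (cylSet I u)).toReal⁻¹ * ((if IsCliq I c then (-1 : ℝ) ^ c.card else 0) *
          ∫ ξ in cylSet I (u * ctr I c), φ ξ ∂P) := by
      rw [hlam, hmult, ENNReal.toReal_mul]
      split_ifs
      · field_simp [hF u, hF (ctr I c)]
      · simp
    rw [Finset.sum_congr rfl fun c _ => hterm c, ← Finset.mul_sum,
      sum_isCliq_neg_one_pow_mul_setIntegral_eq_zero hint, mul_zero]
  · rw [hlam, one_div]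
    exact abs_inv_mul_setIntegral_le (hpos u).ne' (measure_ne_top P _) hbd

/-- Poisson integrals of essentially bounded boundary functions are bounded
Möbius harmonic functions. -/
theorem poisson_integral_harmonic {α : Type*} [Fintype α] (I : α → α → Prop)
    (hsymm : ∀ a b, I a b → I b a) (hirr : ∀ a, ¬ I a a)
    (hconn : ∀ a b : α, Relation.ReflTransGen (fun x y : α => ¬ I x y) a b)
    (P : Measure (Bdry I)) [IsProbabilityMeasure P]
    (hpos : ∀ u : TM I, 0 < P (cylSet I u))
    (hmult : ∀ u v : TM I, P (cylSet I (u * v)) = P (cylSet I u) * P (cylSet I v))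
    (φ : Bdry I → ℝ) (hmeas : Measurable φ) (C : ℝ)
    (hbd : ∀ᵐ ξ ∂P, |φ ξ| ≤ C)
    (lam : TM I → ℝ)
    (hlam : ∀ u : TM I,
      lam u = (1 / (P (cylSet I u)).toReal) * ∫ ξ in cylSet I u, φ ξ ∂P) :
    (∀ u : TM I,
      (∑ c : Finset α,
        if IsCliq I c then
          (-1 : ℝ) ^ c.card * (P (cylSet I (ctr I c))).toReal * lam (u * ctr I c)
        else 0) = 0) ∧
    (∀ u : TM I, |lam u| ≤ C) :=
  poisson_integral_harmonic_general I hsymm hirr P hpos hmult φ hmeas C hbd lam hlam
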